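/- arXiv:1212.6410 — 2 statements merged into one kernel-verified Lean document; each statement's English description precedes it below -/
import Mathlib

section
/- For u(η,θ) = (a²/(8ν))(cosh 2b − cos 2θ)(cosh 2b − cosh 2η) sech(2b) and J(η,θ) = a²(sinh²η + sin²θ), the double integral ∫₀^b ∫₀^{2π} u(η,θ) J(η,θ) dθ dη equals (π a⁴/(32ν)) sinh²(2b) tanh(2b). -/
open Real MeasureTheory intervalIntegral

/-! Writing `sin² θ = (1 - cos 2θ)/2` and `cos² 2θ = (1 + cos 4θ)/2`, the angular integrand is a
trigonometric polynomial in `θ`, so only its mean survives over a period; likewise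
`sinh² η = (cosh 2η - 1)/2` and `cosh² 2η = (1 + cosh 4η)/2` make the remaining radial integrand a
combination of `cosh 2η` and `cosh 4η`, which integrates explicitly. At the boundary value
`c = cosh 2b` the result collapses to `sinh³ 2b / 4`. -/

lemma hasDerivAt_sin_const_mul (k x : ℝ) :
    HasDerivAt (fun x => sin (k * x)) (k * cos (k * x)) x := by
  simpa [mul_comm] using (hasDerivAt_const_mul (x := x) k).sin

lemma hasDerivAt_sinh_const_mul (k x : ℝ) :
    HasDerivAt (fun x => sinh (k * x)) (k * cosh (k * x)) x := by
  simpa [mul_comm] using (hasDerivAt_const_mul (x := x) k).sinh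

lemma integral_sub_cos_two_mul_mul_add_sin_sq (c s : ℝ) :
    ∫ θ in (0 : ℝ)..(2 * π), (c - cos (2 * θ)) * (s + sin θ ^ 2) =
      π * (c * (2 * s + 1) + 1 / 2) := by
  have hderiv : ∀ θ ∈ Set.uIcc 0 (2 * π), HasDerivAt
      (fun θ => (c * (s + 1 / 2) + 1 / 4) * θ - (c / 2 + s + 1 / 2) * sin (2 * θ) / 2
        + sin (4 * θ) / 16)
      ((c - cos (2 * θ)) * (s + sin θ ^ 2)) θ := by
    intro θ _
    refine ((((hasDerivAt_id θ).const_mul _).sub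
      (((hasDerivAt_sin_const_mul 2 θ).const_mul _).div_const 2)).add
      ((hasDerivAt_sin_const_mul 4 θ).div_const 16)).congr_deriv ?_
    rw [sin_sq_eq_half_sub, show (4 : ℝ) * θ = 2 * (2 * θ) by ring, cos_two_mul (2 * θ)]
    ring
  rw [integral_eq_sub_of_hasDerivAt hderiv (by apply Continuous.intervalIntegrable; fun_prop)]
  have hsin (n : ℕ) : sin (n * (2 * π)) = 0 := by
    simpa [mul_assoc, mul_left_comm] using sin_nat_mul_pi (2 * n)
  have hsin2 := hsin 2
  have hsin4 := hsin 4
  push_cast at hsin2 hsin4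
  simp only [hsin2, hsin4, mul_zero, sin_zero]
  ring

lemma integral_cosh_sub_cosh_two_mul_mul (c b : ℝ) :
    ∫ η in (0 : ℝ)..b, (c - cosh (2 * η)) * (c * cosh (2 * η) + 1 / 2) =
      (c ^ 2 - 1 / 2) * sinh (2 * b) / 2 - c * sinh (4 * b) / 8 := by
  have hderiv : ∀ η ∈ Set.uIcc 0 b, HasDerivAt
      (fun η => (c ^ 2 - 1 / 2) * sinh (2 * η) / 2 - c * sinh (4 * η) / 8)
      ((c - cosh (2 * η)) * (c * cosh (2 * η) + 1 / 2)) η := by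
    intro η _
    refine ((((hasDerivAt_sinh_const_mul 2 η).const_mul _).div_const 2).sub
      (((hasDerivAt_sinh_const_mul 4 η).const_mul c).div_const 8)).congr_deriv ?_
    rw [show (4 : ℝ) * η = 2 * (2 * η) by ring, cosh_two_mul (2 * η), sinh_sq]
    ring
  rw [integral_eq_sub_of_hasDerivAt hderiv (by apply Continuous.intervalIntegrable; fun_prop)]
  simp

lemma integral_cosh_sub_cosh_two_mul_mul_self (b : ℝ) :
    ∫ η in (0 : ℝ)..b, (cosh (2 * b) - cosh (2 * η)) * (cosh (2 * b) * cosh (2 * η) + 1 / 2) =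
      sinh (2 * b) ^ 3 / 4 := by
  rw [integral_cosh_sub_cosh_two_mul_mul, show (4 : ℝ) * b = 2 * (2 * b) by ring,
    sinh_two_mul (2 * b)]
  linear_combination sinh (2 * b) / 4 * cosh_sq (2 * b)

theorem stmt_8_general (a ν b : ℝ) :
    (∫ η in (0 : ℝ)..b, ∫ θ in (0 : ℝ)..(2 * π),
      (a ^ 2 / (8 * ν) * (Real.cosh (2 * b) - Real.cos (2 * θ)) *
        (Real.cosh (2 * b) - Real.cosh (2 * η)) / Real.cosh (2 * b)) *
      (a ^ 2 * (Real.sinh η ^ 2 + Real.sin θ ^ 2))) =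
    π * a ^ 4 / (32 * ν) * Real.sinh (2 * b) ^ 2 * Real.tanh (2 * b) := by
  have inner (η : ℝ) : ∫ θ in (0 : ℝ)..(2 * π),
      (a ^ 2 / (8 * ν) * (cosh (2 * b) - cos (2 * θ)) * (cosh (2 * b) - cosh (2 * η)) /
        cosh (2 * b)) * (a ^ 2 * (sinh η ^ 2 + sin θ ^ 2)) =
      a ^ 4 * π / (8 * ν * cosh (2 * b)) *
        ((cosh (2 * b) - cosh (2 * η)) * (cosh (2 * b) * cosh (2 * η) + 1 / 2)) := by
    have hsplit (θ : ℝ) :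
        (a ^ 2 / (8 * ν) * (cosh (2 * b) - cos (2 * θ)) * (cosh (2 * b) - cosh (2 * η)) /
          cosh (2 * b)) * (a ^ 2 * (sinh η ^ 2 + sin θ ^ 2)) =
        a ^ 4 * (cosh (2 * b) - cosh (2 * η)) / (8 * ν * cosh (2 * b)) *
          ((cosh (2 * b) - cos (2 * θ)) * (sinh η ^ 2 + sin θ ^ 2)) := by
      ring
    rw [integral_congr fun θ _ => hsplit θ, intervalIntegral.integral_const_mul,
      integral_sub_cos_two_mul_mul_add_sin_sq, cosh_two_mul η, cosh_sq]
    ring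
  rw [integral_congr fun η _ => inner η, intervalIntegral.integral_const_mul,
    integral_cosh_sub_cosh_two_mul_mul_self, tanh_eq_sinh_div_cosh]
  ring

/-- Flux of the stationary elliptical Poiseuille flow with unit pressure gradient. -/
theorem stmt_8 (a ν b : ℝ) (ha : 0 < a) (hν : 0 < ν) (hb : 0 < b) :
    (∫ η in (0 : ℝ)..b, ∫ θ in (0 : ℝ)..(2 * π),
      (a ^ 2 / (8 * ν) * (Real.cosh (2 * b) - Real.cos (2 * θ)) *
        (Real.cosh (2 * b) - Real.cosh (2 * η)) / Real.cosh (2 * b)) *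
      (a ^ 2 * (Real.sinh η ^ 2 + Real.sin θ ^ 2))) =
    π * a ^ 4 / (32 * ν) * Real.sinh (2 * b) ^ 2 * Real.tanh (2 * b) :=
  stmt_8_general a ν b
end

section
/- Let b > 0, ν > 0, a > 0. The stationary modes û₀(η) = −(a²/(8ν))(cosh 2η − cosh 2b) and û₂(η) = −(a²/(16ν))(1 + e^{4b} − e^{2b−2η} − e^{2b+2η})/(1 + e^{4b}) satisfy ∫₀^b (cosh(2η) û₀(η) − û₂(η)) dη = (a²/(32ν)) sinh²(2b) tanh(2b), so the bracketed quantity in the flux–pressure relation is strictly positive. -/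
open Real intervalIntegral

/-! Since `(1 + e^{4b}) / e^{2b} = 2 cosh 2b`, the second mode is
`û₂(η) = -(a²/(16ν)) (1 - cosh 2η / cosh 2b)`, and with `2 cosh² 2η = 1 + cosh 4η` the integrand
becomes `(a²/(16ν)) ((2 cosh 2b - sech 2b) cosh 2η - cosh 4η)`. Integrating and using
`cosh² - sinh² = 1` gives `(a²/(32ν)) sinh³ 2b / cosh 2b`. -/

lemma integral_cosh_const_mul {c : ℝ} (hc : c ≠ 0) (a b : ℝ) :
    ∫ x in a..b, cosh (c * x) = (sinh (c * b) - sinh (c * a)) / c := by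
  have hderiv (x : ℝ) : HasDerivAt (fun x => sinh (c * x) / c) (cosh (c * x)) x := by
    simpa [hc] using ((hasDerivAt_id' x).const_mul c).sinh.div_const c
  have hcont : Continuous fun x => cosh (c * x) := by fun_prop
  rw [integral_eq_sub_of_hasDerivAt (fun x _ => hderiv x) (hcont.intervalIntegrable a b)]
  ring

lemma exp_sub_add_exp_add_div_eq_cosh_div_cosh (b x : ℝ) :
    (exp (2 * b - x) + exp (2 * b + x)) / (1 + exp (4 * b)) = cosh x / cosh (2 * b) := by
  rw [cosh_eq, cosh_eq, sub_eq_add_neg, exp_add, exp_add, show 4 * b = 2 * b + 2 * b by ring,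
    exp_add, exp_neg, exp_neg]
  field_simp
  ring

lemma two_cosh_sub_inv_mul_half_sinh_sub_sinh_two_mul (x : ℝ) :
    (2 * cosh x - (cosh x)⁻¹) * (sinh x / 2) - sinh (2 * x) / 4 = sinh x ^ 2 * tanh x / 2 := by
  rw [sinh_two_mul, tanh_eq_sinh_div_cosh]
  have := (cosh_pos x).ne'
  field_simp
  rw [cosh_sq]
  ring

/-- The bracketed quantity in the stationary (`m = 0`) flux–pressure relation
equals `(a²/(32ν)) sinh²(2b) tanh(2b)`, hence is strictly positive. -/
theorem stmt_19 (a ν b : ℝ) (ha : 0 < a) (hν : 0 < ν) (hb : 0 < b)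
    (u₀ u₂ : ℝ → ℝ)
    (hu₀ : ∀ η : ℝ, u₀ η = -(a ^ 2 / (8 * ν)) * (Real.cosh (2 * η) - Real.cosh (2 * b)))
    (hu₂ : ∀ η : ℝ, u₂ η = -(a ^ 2 / (16 * ν)) *
      (1 + Real.exp (4 * b) - Real.exp (2 * b - 2 * η) - Real.exp (2 * b + 2 * η)) /
        (1 + Real.exp (4 * b))) :
    (∫ η in (0 : ℝ)..b, (Real.cosh (2 * η) * u₀ η - u₂ η)) =
      a ^ 2 / (32 * ν) * Real.sinh (2 * b) ^ 2 * Real.tanh (2 * b) ∧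
    0 < ∫ η in (0 : ℝ)..b, (Real.cosh (2 * η) * u₀ η - u₂ η) := by
  have hintegrand (η : ℝ) : cosh (2 * η) * u₀ η - u₂ η = a ^ 2 / (16 * ν) *
      ((2 * cosh (2 * b) - (cosh (2 * b))⁻¹) * cosh (2 * η) - cosh (4 * η)) := by
    have hsplit : (1 + exp (4 * b) - exp (2 * b - 2 * η) - exp (2 * b + 2 * η)) /
        (1 + exp (4 * b)) = 1 - cosh (2 * η) / cosh (2 * b) := by
      rw [← exp_sub_add_exp_add_div_eq_cosh_div_cosh, sub_sub, sub_div, div_self (by positivity)]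
    have hcosh4 : cosh (4 * η) = 2 * cosh (2 * η) ^ 2 - 1 := by
      rw [show 4 * η = 2 * (2 * η) by ring, cosh_two_mul, sinh_sq]; ring
    rw [hu₀, hu₂, mul_div_assoc, hsplit, hcosh4]
    ring
  have hvalue : ∫ η in (0 : ℝ)..b, (cosh (2 * η) * u₀ η - u₂ η) =
      a ^ 2 / (32 * ν) * sinh (2 * b) ^ 2 * tanh (2 * b) := by
    simp_rw [hintegrand]
    rw [integral_const_mul, integral_sub, integral_const_mul, integral_cosh_const_mul two_ne_zero,
      integral_cosh_const_mul four_ne_zero]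
    · simp only [mul_zero, sinh_zero, sub_zero, show 4 * b = 2 * (2 * b) by ring]
      rw [two_cosh_sub_inv_mul_half_sinh_sub_sinh_two_mul]
      ring
    all_goals exact Continuous.intervalIntegrable (by fun_prop) _ _
  refine ⟨hvalue, hvalue ▸ ?_⟩
  have hsinh : 0 < sinh (2 * b) := sinh_pos_iff.mpr (by positivity)
  have htanh : 0 < tanh (2 * b) := tanh_eq_sinh_div_cosh (2 * b) ▸ div_pos hsinh (cosh_pos _)
  positivity
end
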